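/- Corollary 2 (relaxed δISS condition for deep GRUs inside the invariant set): consider the deep GRU with M layers and define, for each layer i, σ̄_z^i = σ(‖[W_z^i U_z^i b_z^i]‖_∞), σ̄_f^i = σ(‖[W_f^i U_f^i b_f^i]‖_∞), φ̄_r^i = tanh(‖[W_r^i U_r^i b_r^i]‖_∞). Suppose that for every layer i, ‖U_r^i‖_∞ ( (1/4) ‖U_f^i‖_∞ + σ̄_f^i ) < 1 − (1/4) ((1 + φ̄_r^i)/(1 − σ̄_z^i)) ‖U_z^i‖_∞. Then the deep GRU restricted to initial states with ‖x̄^i‖_∞ ≤ 1 for all layers is Incrementally Input-to-State Stable: there exist a class-KL function β_Δ and a class-K∞ function γ_Δu such that for every pair of such initial states x̄_a, x̄_b, every pair of input sequences u_a, u_b with ‖u_a(t)‖_∞ ≤ 1 and ‖u_b(t)‖_∞ ≤ 1 for all t, and every k ≥ 0, ‖x_a(k) − x_b(k)‖_∞ ≤ β_Δ(‖x̄_a − x̄_b‖_∞, k) + γ_Δu(sup_t ‖u_a(t) − u_b(t)‖_∞). -/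

import Mathlib

/-!
Every GRU step maps the box `‖x‖∞ ≤ 1` into itself, since the new state is a componentwise convex
combination of `x` and a `tanh`. On that box each gate pre-activation is bounded by the norm
`‖[W U b]‖∞` of its weights, so the update gate is at most `σ̄_z`, the forget gate at most `σ̄_f`
and the candidate at most `φ̄_r`. With `σ` being `1/4`-Lipschitz and `tanh` `1`-Lipschitz, one step
of layer `i` satisfies `‖Δx⁺‖ ≤ λᵢ ‖Δx‖ + μᵢ ‖Δu‖` with
`λᵢ = σ̄_z + (1 - σ̄_z) ‖U_r‖ (‖U_f‖/4 + σ̄_f) + (1 + φ̄_r) ‖U_z‖/4`; multiplied by `1 - σ̄_z`,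
the relaxed condition is exactly `λᵢ < 1`. Layer `i` is then a contraction driven by the new state
of layer `i - 1`; for any `ρ` with `maxᵢ λᵢ < ρ < 1`, induction over the layers bounds the error of
each layer by `Cᵢ ρᵏ ‖Δx̄‖ + Gᵢ sup ‖Δu‖`, which gives a linear `γ` and an exponential `β`.
-/

open Real Filter

noncomputable def sigmoid (s : ℝ) : ℝ := 1 / (1 + Real.exp (-s))

/-- The induced norm `‖A‖∞`. -/
noncomputable def matNorm {n m : ℕ} (A : Matrix (Fin n) (Fin m) ℝ) : ℝ :=
  ⨆ i, ∑ j, |A i j|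

/-- The norm `‖[A B c]‖∞` of the horizontal concatenation. -/
noncomputable def catNorm {n m p : ℕ} (A : Matrix (Fin n) (Fin m) ℝ)
    (B : Matrix (Fin n) (Fin p) ℝ) (c : Fin n → ℝ) : ℝ :=
  ⨆ i, (∑ j, |A i j| + ∑ j, |B i j| + |c i|)

noncomputable def gruStep {nu nx : ℕ}
    (Wz Wf Wr : Matrix (Fin nx) (Fin nu) ℝ)
    (Uz Uf Ur : Matrix (Fin nx) (Fin nx) ℝ)
    (bz bf br : Fin nx → ℝ)
    (u : Fin nu → ℝ) (x : Fin nx → ℝ) : Fin nx → ℝ :=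
  let z : Fin nx → ℝ := fun i => _root_.sigmoid ((Wz.mulVec u + Uz.mulVec x + bz) i)
  let f : Fin nx → ℝ := fun i => _root_.sigmoid ((Wf.mulVec u + Uf.mulVec x + bf) i)
  let r : Fin nx → ℝ := fun i => Real.tanh ((Wr.mulVec u + Ur.mulVec (f * x) + br) i)
  fun j => z j * x j + (1 - z j) * r j

def IsKInf (γ : ℝ → ℝ) : Prop :=
  ContinuousOn γ (Set.Ici 0) ∧ StrictMonoOn γ (Set.Ici 0) ∧ γ 0 = 0 ∧
    ∀ M : ℝ, ∃ s, 0 ≤ s ∧ M < γ s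

def IsKL (β : ℝ → ℕ → ℝ) : Prop :=
  (∀ k : ℕ, IsKInf fun s => β s k) ∧
    (∀ s : ℝ, 0 ≤ s → ∀ k l : ℕ, k ≤ l → β s l ≤ β s k) ∧
    (∀ s : ℝ, 0 ≤ s → Filter.Tendsto (fun k : ℕ => β s k) Filter.atTop (nhds 0))

/-- Input dimension of layer `i` of a deep GRU: the first layer is fed by the
external input (dimension `nu`), layer `i+1` is fed by the state of layer `i`. -/
def inDim (nu : ℕ) (n : ℕ → ℕ) : ℕ → ℕ
  | 0 => nu
  | i + 1 => n i

open scoped NNReal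

lemma sigmoid_eq_real_sigmoid : _root_.sigmoid = Real.sigmoid :=
  funext fun _ => one_div _

namespace Real

lemma lipschitzWith_sigmoid : LipschitzWith 4⁻¹ sigmoid := by
  refine lipschitzWith_of_nnnorm_deriv_le differentiable_sigmoid fun x => ?_
  rw [← NNReal.coe_le_coe, coe_nnnorm, deriv_sigmoid, norm_eq_abs, NNReal.coe_inv,
    abs_of_nonneg (mul_nonneg (sigmoid_nonneg x) (sub_nonneg.2 (sigmoid_le_one x)))]
  norm_num
  nlinarith [sq_nonneg (2 * sigmoid x - 1)]

lemma tanh_eq_two_mul_sigmoid_sub_one (x : ℝ) : tanh x = 2 * sigmoid (2 * x) - 1 := by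
  have h : exp (-(2 * x)) = exp (-x) ^ 2 := by rw [← exp_nat_mul]; ring_nf
  rw [tanh_eq, sigmoid_def, h, exp_neg]
  field_simp
  ring

lemma tanh_monotone : Monotone tanh := fun a b hab => by
  simp only [tanh_eq_two_mul_sigmoid_sub_one]
  linarith [sigmoid_le (by linarith : 2 * a ≤ 2 * b)]

lemma lipschitzWith_tanh : LipschitzWith 1 tanh := by
  refine LipschitzWith.of_dist_le_mul fun a b => ?_
  have h := lipschitzWith_sigmoid.dist_le_mul (2 * a) (2 * b)
  simp only [dist_eq_norm, norm_eq_abs, tanh_eq_two_mul_sigmoid_sub_one] at h ⊢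
  rw [← mul_sub, abs_mul, abs_two] at h
  rw [show 2 * sigmoid (2 * a) - 1 - (2 * sigmoid (2 * b) - 1)
      = 2 * (sigmoid (2 * a) - sigmoid (2 * b)) by ring, abs_mul, abs_two]
  push_cast at h ⊢
  linarith

lemma abs_tanh (x : ℝ) : |tanh x| = tanh |x| := by
  rcases le_total 0 x with hx | hx
  · rw [abs_of_nonneg hx, abs_of_nonneg (by simpa using tanh_monotone hx)]
  · rw [abs_of_nonpos hx, abs_of_nonpos (by simpa using tanh_monotone hx), tanh_neg]

end Real

section SupNorm

variable {ι : Type*} [Fintype ι]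

lemma LipschitzWith.norm_comp_sub_comp_le {f : ℝ → ℝ} {K : ℝ≥0} (hf : LipschitzWith K f)
    (v w : ι → ℝ) : ‖f ∘ v - f ∘ w‖ ≤ K * ‖v - w‖ := by
  refine pi_norm_le_iff_of_nonneg (by positivity) |>.2 fun j => ?_
  calc ‖f (v j) - f (w j)‖ ≤ K * ‖v j - w j‖ := by
        simpa only [dist_eq_norm] using hf.dist_le_mul (v j) (w j)
    _ ≤ K * ‖v - w‖ := by gcongr; exact norm_le_pi_norm (v - w) j

lemma norm_sigmoid_comp_le (v : ι → ℝ) : ‖Real.sigmoid ∘ v‖ ≤ Real.sigmoid ‖v‖ := by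
  refine pi_norm_le_iff_of_nonneg (Real.sigmoid_nonneg _) |>.2 fun j => ?_
  rw [Function.comp_apply, Real.norm_eq_abs, abs_of_pos (Real.sigmoid_pos _)]
  exact Real.sigmoid_le ((le_abs_self _).trans (norm_le_pi_norm v j))

lemma norm_tanh_comp_le (v : ι → ℝ) : ‖tanh ∘ v‖ ≤ tanh ‖v‖ := by
  refine pi_norm_le_iff_of_nonneg (by simpa using tanh_monotone (norm_nonneg v)) |>.2 fun j => ?_
  rw [Function.comp_apply, Real.norm_eq_abs, abs_tanh]
  exact tanh_monotone (norm_le_pi_norm v j)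

end SupNorm

section MatrixNorm

open Matrix

lemma abs_mulVec_apply_le {m n : Type*} [Fintype n] (A : Matrix m n ℝ) (v : n → ℝ) (i : m) :
    |(A *ᵥ v) i| ≤ (∑ j, |A i j|) * ‖v‖ :=
  calc |∑ j, A i j * v j| ≤ ∑ j, |A i j| * |v j| :=
        (Finset.abs_sum_le_sum_abs _ _).trans_eq (by simp only [abs_mul])
    _ ≤ ∑ j, |A i j| * ‖v‖ := by
        gcongr with j; simpa only [Real.norm_eq_abs] using norm_le_pi_norm v j
    _ = (∑ j, |A i j|) * ‖v‖ := (Finset.sum_mul _ _ _).symm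

variable {n m p : ℕ}

lemma matNorm_nonneg (A : Matrix (Fin n) (Fin m) ℝ) : 0 ≤ matNorm A :=
  Real.iSup_nonneg fun _ => by positivity

lemma catNorm_nonneg (A : Matrix (Fin n) (Fin m) ℝ) (B : Matrix (Fin n) (Fin p) ℝ)
    (c : Fin n → ℝ) : 0 ≤ catNorm A B c :=
  Real.iSup_nonneg fun _ => by positivity

lemma norm_mulVec_le_matNorm (A : Matrix (Fin n) (Fin m) ℝ) (v : Fin m → ℝ) :
    ‖A *ᵥ v‖ ≤ matNorm A * ‖v‖ := by
  refine pi_norm_le_iff_of_nonneg (by have := matNorm_nonneg A; positivity) |>.2 fun i => ?_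
  rw [Real.norm_eq_abs]
  refine (abs_mulVec_apply_le A v i).trans ?_
  gcongr
  exact le_ciSup (Finite.bddAbove_range fun i => ∑ j, |A i j|) i

lemma norm_affine_sub_affine_le (A : Matrix (Fin n) (Fin m) ℝ) (B : Matrix (Fin n) (Fin p) ℝ)
    (c : Fin n → ℝ) (u u' : Fin m → ℝ) (x x' : Fin p → ℝ) :
    ‖(A *ᵥ u + B *ᵥ x + c) - (A *ᵥ u' + B *ᵥ x' + c)‖ ≤
      matNorm A * ‖u - u'‖ + matNorm B * ‖x - x'‖ := by
  rw [show A *ᵥ u + B *ᵥ x + c - (A *ᵥ u' + B *ᵥ x' + c) = A *ᵥ (u - u') + B *ᵥ (x - x') by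
    simp only [Matrix.mulVec_sub]; abel]
  exact (norm_add_le _ _).trans (add_le_add (norm_mulVec_le_matNorm A _) (norm_mulVec_le_matNorm B _))

lemma norm_affine_le_catNorm (A : Matrix (Fin n) (Fin m) ℝ) (B : Matrix (Fin n) (Fin p) ℝ)
    (c : Fin n → ℝ) {u : Fin m → ℝ} {x : Fin p → ℝ} (hu : ‖u‖ ≤ 1) (hx : ‖x‖ ≤ 1) :
    ‖A *ᵥ u + B *ᵥ x + c‖ ≤ catNorm A B c := by
  refine pi_norm_le_iff_of_nonneg (catNorm_nonneg A B c) |>.2 fun i => ?_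
  calc ‖(A *ᵥ u + B *ᵥ x + c) i‖ ≤ |(A *ᵥ u) i| + |(B *ᵥ x) i| + |c i| := by
        simp only [Pi.add_apply, Real.norm_eq_abs]; exact abs_add_three _ _ _
    _ ≤ (∑ j, |A i j|) * 1 + (∑ j, |B i j|) * 1 + |c i| := by
        gcongr
        · exact (abs_mulVec_apply_le A u i).trans (by gcongr)
        · exact (abs_mulVec_apply_le B x i).trans (by gcongr)
    _ ≤ catNorm A B c := by
        rw [mul_one, mul_one]
        exact le_ciSup (Finite.bddAbove_range
          fun i => ∑ j, |A i j| + ∑ j, |B i j| + |c i|) i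

end MatrixNorm

section Gates

open Matrix

variable {n m p : ℕ} (A : Matrix (Fin n) (Fin m) ℝ) (B : Matrix (Fin n) (Fin p) ℝ) (c : Fin n → ℝ)

lemma norm_sigmoid_affine_le {u : Fin m → ℝ} {x : Fin p → ℝ} (hu : ‖u‖ ≤ 1) (hx : ‖x‖ ≤ 1) :
    ‖_root_.sigmoid ∘ (A *ᵥ u + B *ᵥ x + c)‖ ≤ _root_.sigmoid (catNorm A B c) := by
  rw [sigmoid_eq_real_sigmoid]
  exact (norm_sigmoid_comp_le _).trans (Real.sigmoid_le (norm_affine_le_catNorm A B c hu hx))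

lemma norm_sigmoid_affine_sub_le (u u' : Fin m → ℝ) (x x' : Fin p → ℝ) :
    ‖_root_.sigmoid ∘ (A *ᵥ u + B *ᵥ x + c) - _root_.sigmoid ∘ (A *ᵥ u' + B *ᵥ x' + c)‖ ≤
      1 / 4 * (matNorm A * ‖u - u'‖ + matNorm B * ‖x - x'‖) := by
  rw [sigmoid_eq_real_sigmoid]
  refine (Real.lipschitzWith_sigmoid.norm_comp_sub_comp_le _ _).trans ?_
  rw [NNReal.coe_inv, one_div]
  gcongr
  · norm_num
  · exact norm_affine_sub_affine_le A B c u u' x x'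

end Gates

lemma abs_convex_update_sub_le {z z' x x' r r' σ A d e δ φ : ℝ} (hz0 : 0 ≤ z) (hzσ : z ≤ σ)
    (hz1 : z ≤ 1) (hA : A ≤ 1) (hd : 0 ≤ d) (he : 0 ≤ e) (hx : |x - x'| ≤ d)
    (hr : |r - r'| ≤ A * d + e) (hz : |z - z'| ≤ δ) (hx' : |x'| ≤ 1) (hr' : |r'| ≤ φ) :
    |(z * x + (1 - z) * r) - (z' * x' + (1 - z') * r')| ≤
      (σ + (1 - σ) * A) * d + (1 + φ) * δ + e := by
  have hxr : |x' - r'| ≤ 1 + φ := (abs_sub _ _).trans (add_le_add hx' hr')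
  calc |(z * x + (1 - z) * r) - (z' * x' + (1 - z') * r')|
      = |z * (x - x') + (z - z') * (x' - r') + (1 - z) * (r - r')| := by ring_nf
    _ ≤ z * d + δ * (1 + φ) + (1 - z) * (A * d + e) := by
        refine (abs_add_three _ _ _).trans ?_
        rw [abs_mul, abs_mul, abs_mul, abs_of_nonneg hz0, abs_of_nonneg (sub_nonneg.2 hz1)]
        gcongr
        exact (abs_nonneg _).trans hz
    -- the convex weight `z` multiplies `(1 - A) d ≥ 0`, so it may be raised to `σ`
    _ = A * d + z * ((1 - A) * d) + δ * (1 + φ) + (1 - z) * e := by ring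
    _ ≤ A * d + σ * ((1 - A) * d) + δ * (1 + φ) + 1 * e := by
        have := mul_le_mul_of_nonneg_right hzσ (mul_nonneg (sub_nonneg.2 hA) hd)
        have := mul_le_mul_of_nonneg_right (by linarith : 1 - z ≤ 1) he
        linarith
    _ = (σ + (1 - σ) * A) * d + (1 + φ) * δ + e := by ring

structure GRULayer (nu nx : ℕ) where
  (Wz Wf Wr : Matrix (Fin nx) (Fin nu) ℝ)
  (Uz Uf Ur : Matrix (Fin nx) (Fin nx) ℝ)
  (bz bf br : Fin nx → ℝ)

noncomputable section

namespace GRULayer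

open Matrix

variable {nu nx : ℕ} (L : GRULayer nu nx)

def updateGate (u : Fin nu → ℝ) (x : Fin nx → ℝ) : Fin nx → ℝ :=
  _root_.sigmoid ∘ (L.Wz *ᵥ u + L.Uz *ᵥ x + L.bz)

def forgetGate (u : Fin nu → ℝ) (x : Fin nx → ℝ) : Fin nx → ℝ :=
  _root_.sigmoid ∘ (L.Wf *ᵥ u + L.Uf *ᵥ x + L.bf)

def candidate (u : Fin nu → ℝ) (x : Fin nx → ℝ) : Fin nx → ℝ :=
  tanh ∘ (L.Wr *ᵥ u + L.Ur *ᵥ (L.forgetGate u x * x) + L.br)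

def step (u : Fin nu → ℝ) (x : Fin nx → ℝ) : Fin nx → ℝ :=
  gruStep L.Wz L.Wf L.Wr L.Uz L.Uf L.Ur L.bz L.bf L.br u x

lemma step_apply (u : Fin nu → ℝ) (x : Fin nx → ℝ) (j : Fin nx) :
    L.step u x j = L.updateGate u x j * x j + (1 - L.updateGate u x j) * L.candidate u x j :=
  rfl

def sigmaZ : ℝ := _root_.sigmoid (catNorm L.Wz L.Uz L.bz)

def sigmaF : ℝ := _root_.sigmoid (catNorm L.Wf L.Uf L.bf)

def phiR : ℝ := tanh (catNorm L.Wr L.Ur L.br)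

def candidateStateGain : ℝ := matNorm L.Ur * (1 / 4 * matNorm L.Uf + L.sigmaF)

def stateGain : ℝ :=
  L.sigmaZ + (1 - L.sigmaZ) * L.candidateStateGain + 1 / 4 * (1 + L.phiR) * matNorm L.Uz

def candidateInputGain : ℝ := matNorm L.Wr + matNorm L.Ur * (1 / 4 * matNorm L.Wf)

def inputGain : ℝ := 1 / 4 * (1 + L.phiR) * matNorm L.Wz + L.candidateInputGain

def RelaxedCondition : Prop :=
  L.candidateStateGain < 1 - 1 / 4 * ((1 + L.phiR) / (1 - L.sigmaZ)) * matNorm L.Uz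

lemma sigmaZ_lt_one : L.sigmaZ < 1 := by
  rw [sigmaZ, sigmoid_eq_real_sigmoid]; exact Real.sigmoid_lt_one _

lemma phiR_nonneg : 0 ≤ L.phiR := by
  rw [phiR]; simpa using tanh_monotone (catNorm_nonneg L.Wr L.Ur L.br)

lemma candidateStateGain_nonneg : 0 ≤ L.candidateStateGain := by
  have := matNorm_nonneg L.Ur; have := matNorm_nonneg L.Uf
  have : 0 ≤ L.sigmaF := by rw [sigmaF, sigmoid_eq_real_sigmoid]; exact Real.sigmoid_nonneg _
  unfold candidateStateGain; positivity

lemma stateGain_nonneg : 0 ≤ L.stateGain := by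
  have := L.sigmaZ_lt_one; have := L.phiR_nonneg; have := L.candidateStateGain_nonneg
  have := matNorm_nonneg L.Uz
  have : 0 ≤ L.sigmaZ := by rw [sigmaZ, sigmoid_eq_real_sigmoid]; exact Real.sigmoid_nonneg _
  have : 0 ≤ (1 - L.sigmaZ) * L.candidateStateGain := mul_nonneg (by linarith) L.candidateStateGain_nonneg
  unfold stateGain; positivity

lemma candidateInputGain_nonneg : 0 ≤ L.candidateInputGain := by
  have := matNorm_nonneg L.Wr; have := matNorm_nonneg L.Ur; have := matNorm_nonneg L.Wf
  unfold candidateInputGain; positivity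

lemma inputGain_nonneg : 0 ≤ L.inputGain := by
  have := L.phiR_nonneg; have := matNorm_nonneg L.Wz; have := L.candidateInputGain_nonneg
  unfold inputGain; positivity

lemma candidateStateGain_lt_one (h : L.RelaxedCondition) : L.candidateStateGain < 1 := by
  have := L.sigmaZ_lt_one; have := L.phiR_nonneg; have := matNorm_nonneg L.Uz
  have : 0 ≤ 1 / 4 * ((1 + L.phiR) / (1 - L.sigmaZ)) * matNorm L.Uz :=
    mul_nonneg (mul_nonneg (by norm_num) (div_nonneg (by linarith) (by linarith))) this
  unfold RelaxedCondition at h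
  linarith

lemma stateGain_lt_one (h : L.RelaxedCondition) : L.stateGain < 1 := by
  have hσ : 0 < 1 - L.sigmaZ := sub_pos.2 L.sigmaZ_lt_one
  have h' := mul_lt_mul_of_pos_right h hσ
  rw [sub_mul, one_mul, show 1 / 4 * ((1 + L.phiR) / (1 - L.sigmaZ)) * matNorm L.Uz *
    (1 - L.sigmaZ) = 1 / 4 * (1 + L.phiR) * matNorm L.Uz by field_simp] at h'
  unfold stateGain
  linarith

lemma updateGate_apply_mem (u : Fin nu → ℝ) (x : Fin nx → ℝ) (j : Fin nx) :
    L.updateGate u x j ∈ Set.Icc 0 1 := by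
  simp only [updateGate, Function.comp_apply, sigmoid_eq_real_sigmoid]
  exact ⟨Real.sigmoid_nonneg _, Real.sigmoid_le_one _⟩

lemma norm_forgetGate_le_one (u : Fin nu → ℝ) (x : Fin nx → ℝ) : ‖L.forgetGate u x‖ ≤ 1 := by
  rw [forgetGate, sigmoid_eq_real_sigmoid]
  exact (norm_sigmoid_comp_le _).trans (Real.sigmoid_le_one _)

lemma norm_step_le_one (u : Fin nu → ℝ) {x : Fin nx → ℝ} (hx : ‖x‖ ≤ 1) :
    ‖L.step u x‖ ≤ 1 := by
  refine pi_norm_le_iff_of_nonneg zero_le_one |>.2 fun j => ?_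
  obtain ⟨hz0, hz1⟩ := L.updateGate_apply_mem u x j
  have hxj : |x j| ≤ 1 := (norm_le_pi_norm x j).trans hx
  have hrj : |L.candidate u x j| ≤ 1 := (abs_tanh_lt_one _).le
  rw [step_apply, Real.norm_eq_abs]
  calc _ ≤ |L.updateGate u x j| * |x j| + |1 - L.updateGate u x j| * |L.candidate u x j| :=
        (abs_add_le _ _).trans_eq (by rw [abs_mul, abs_mul])
    _ ≤ L.updateGate u x j * 1 + (1 - L.updateGate u x j) * 1 := by
        rw [abs_of_nonneg hz0, abs_of_nonneg (sub_nonneg.2 hz1)]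
        gcongr
    _ = 1 := by ring

variable {ua ub : Fin nu → ℝ} {xa xb : Fin nx → ℝ}

lemma norm_forgetGate_mul_sub_le (hua : ‖ua‖ ≤ 1) (hxa : ‖xa‖ ≤ 1) (hxb : ‖xb‖ ≤ 1) :
    ‖L.forgetGate ua xa * xa - L.forgetGate ub xb * xb‖ ≤
      (L.sigmaF + 1 / 4 * matNorm L.Uf) * ‖xa - xb‖ + 1 / 4 * matNorm L.Wf * ‖ua - ub‖ := by
  have hfa : ‖L.forgetGate ua xa‖ ≤ L.sigmaF := norm_sigmoid_affine_le _ _ _ hua hxa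
  have hdf : ‖L.forgetGate ua xa - L.forgetGate ub xb‖ ≤
      1 / 4 * (matNorm L.Wf * ‖ua - ub‖ + matNorm L.Uf * ‖xa - xb‖) :=
    norm_sigmoid_affine_sub_le L.Wf L.Uf L.bf ua ub xa xb
  have := matNorm_nonneg L.Wf; have := matNorm_nonneg L.Uf
  calc ‖L.forgetGate ua xa * xa - L.forgetGate ub xb * xb‖
      = ‖L.forgetGate ua xa * (xa - xb) + (L.forgetGate ua xa - L.forgetGate ub xb) * xb‖ := by
        congr 1; ring
    _ ≤ ‖L.forgetGate ua xa‖ * ‖xa - xb‖ + ‖L.forgetGate ua xa - L.forgetGate ub xb‖ * ‖xb‖ :=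
        (norm_add_le _ _).trans (add_le_add (norm_mul_le _ _) (norm_mul_le _ _))
    _ ≤ L.sigmaF * ‖xa - xb‖ + 1 / 4 * (matNorm L.Wf * ‖ua - ub‖ + matNorm L.Uf * ‖xa - xb‖) * 1 := by
        gcongr
    _ = _ := by ring

lemma norm_candidate_le {u : Fin nu → ℝ} {x : Fin nx → ℝ} (hu : ‖u‖ ≤ 1) (hx : ‖x‖ ≤ 1) :
    ‖L.candidate u x‖ ≤ L.phiR :=
  have hfx : ‖L.forgetGate u x * x‖ ≤ 1 :=
    (norm_mul_le _ _).trans (mul_le_one₀ (L.norm_forgetGate_le_one u x) (norm_nonneg _) hx)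
  (norm_tanh_comp_le _).trans (tanh_monotone (norm_affine_le_catNorm _ _ _ hu hfx))

lemma norm_candidate_sub_le (hua : ‖ua‖ ≤ 1) (hxa : ‖xa‖ ≤ 1) (hxb : ‖xb‖ ≤ 1) :
    ‖L.candidate ua xa - L.candidate ub xb‖ ≤
      L.candidateStateGain * ‖xa - xb‖ + L.candidateInputGain * ‖ua - ub‖ := by
  have := matNorm_nonneg L.Ur
  calc ‖L.candidate ua xa - L.candidate ub xb‖
      ≤ ‖(L.Wr *ᵥ ua + L.Ur *ᵥ (L.forgetGate ua xa * xa) + L.br) -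
          (L.Wr *ᵥ ub + L.Ur *ᵥ (L.forgetGate ub xb * xb) + L.br)‖ :=
        (Real.lipschitzWith_tanh.norm_comp_sub_comp_le _ _).trans_eq
          (by rw [NNReal.coe_one, one_mul])
    _ ≤ matNorm L.Wr * ‖ua - ub‖ + matNorm L.Ur *
          ((L.sigmaF + 1 / 4 * matNorm L.Uf) * ‖xa - xb‖ + 1 / 4 * matNorm L.Wf * ‖ua - ub‖) := by
        refine (norm_affine_sub_affine_le _ _ _ _ _ _ _).trans ?_
        gcongr
        exact L.norm_forgetGate_mul_sub_le hua hxa hxb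
    _ = _ := by unfold candidateStateGain candidateInputGain; ring

lemma norm_step_sub_le (hua : ‖ua‖ ≤ 1) (hub : ‖ub‖ ≤ 1) (hxa : ‖xa‖ ≤ 1) (hxb : ‖xb‖ ≤ 1)
    (hA : L.candidateStateGain ≤ 1) :
    ‖L.step ua xa - L.step ub xb‖ ≤ L.stateGain * ‖xa - xb‖ + L.inputGain * ‖ua - ub‖ := by
  have := L.stateGain_nonneg; have := L.inputGain_nonneg
  refine pi_norm_le_iff_of_nonneg (by positivity) |>.2 fun j => ?_
  obtain ⟨hz0, hz1⟩ := L.updateGate_apply_mem ua xa j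
  have hzσ : L.updateGate ua xa j ≤ L.sigmaZ := (le_abs_self _).trans
    ((norm_le_pi_norm (L.updateGate ua xa) j).trans (norm_sigmoid_affine_le _ _ _ hua hxa))
  have hdz := (norm_le_pi_norm (L.updateGate ua xa - L.updateGate ub xb) j).trans
    (norm_sigmoid_affine_sub_le L.Wz L.Uz L.bz ua ub xa xb)
  have hdr := (norm_le_pi_norm (L.candidate ua xa - L.candidate ub xb) j).trans
    (L.norm_candidate_sub_le hua hxa hxb)
  have hrb := (norm_le_pi_norm (L.candidate ub xb) j).trans (L.norm_candidate_le hub hxb)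
  rw [Pi.sub_apply, step_apply, step_apply, Real.norm_eq_abs]
  refine (abs_convex_update_sub_le hz0 hzσ hz1 hA (norm_nonneg _)
    (mul_nonneg L.candidateInputGain_nonneg (norm_nonneg _))
    (norm_le_pi_norm (xa - xb) j) hdr hdz ((norm_le_pi_norm xb j).trans hxb) hrb).trans_eq ?_
  unfold stateGain inputGain
  ring

end GRULayer

end

lemma le_pow_mul_add_of_contraction {d v : ℕ → ℝ} {lam mu ρ s w Cv Gv : ℝ}
    (hlam0 : 0 ≤ lam) (hlamρ : lam < ρ) (hlam1 : lam < 1) (hmu : 0 ≤ mu) (hs : 0 ≤ s)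
    (hw : 0 ≤ w) (hCv : 0 ≤ Cv) (hGv : 0 ≤ Gv) (hd0 : d 0 ≤ s)
    (hv : ∀ k, v k ≤ Cv * ρ ^ k * s + Gv * w) (hd : ∀ k, d (k + 1) ≤ lam * d k + mu * v (k + 1))
    (k : ℕ) :
    d k ≤ (1 + mu * Cv * ρ / (ρ - lam)) * ρ ^ k * s + mu * Gv / (1 - lam) * w := by
  set C := 1 + mu * Cv * ρ / (ρ - lam) with hCdef
  set G := mu * Gv / (1 - lam) with hGdef
  have hρ : 0 < ρ - lam := sub_pos.2 hlamρ
  have hρ0 : 0 ≤ ρ := hlam0.trans hlamρ.le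
  have hC : lam * C + mu * Cv * ρ = C * ρ - (ρ - lam) := by rw [hCdef]; field_simp; ring
  have hG : lam * G + mu * Gv = G := by rw [hGdef]; field_simp [(sub_pos.2 hlam1).ne']; ring
  have hG0 : 0 ≤ G := div_nonneg (mul_nonneg hmu hGv) (sub_pos.2 hlam1).le
  induction k with
  | zero =>
    have : 0 ≤ mu * Cv * ρ / (ρ - lam) := div_nonneg (by positivity) hρ.le
    nlinarith
  | succ k ih =>
    have hρk : 0 ≤ ρ ^ k * s := by positivity
    calc d (k + 1) ≤ lam * d k + mu * v (k + 1) := hd k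
      _ ≤ lam * (C * ρ ^ k * s + G * w) + mu * (Cv * ρ ^ (k + 1) * s + Gv * w) := by
          gcongr; exact hv (k + 1)
      _ = (lam * C + mu * Cv * ρ) * (ρ ^ k * s) + (lam * G + mu * Gv) * w := by ring
      _ ≤ C * ρ ^ (k + 1) * s + G * w := by
          rw [hC, hG, pow_succ]; nlinarith [mul_nonneg hρ.le hρk]

/-- Index `i + 1` carries the gains of layer `i`; index `0` is the external input. -/
noncomputable def transientGain (lam mu : ℕ → ℝ) (ρ : ℝ) : ℕ → ℝ
  | 0 => 0
  | i + 1 => 1 + mu i * transientGain lam mu ρ i * ρ / (ρ - lam i)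

noncomputable def cascadeInputGain (lam mu : ℕ → ℝ) : ℕ → ℝ
  | 0 => 1
  | i + 1 => mu i * cascadeInputGain lam mu i / (1 - lam i)

section Cascade

variable {lam mu : ℕ → ℝ} {ρ : ℝ}

lemma transientGain_nonneg (hρ : 0 ≤ ρ) (hmu : ∀ j, 0 ≤ mu j) {i : ℕ}
    (hlam : ∀ j < i, lam j < ρ) : 0 ≤ transientGain lam mu ρ i := by
  induction i with
  | zero => exact le_rfl
  | succ i ih =>
    have := ih fun j hj => hlam j (hj.trans i.lt_succ_self)
    have := sub_pos.2 (hlam i i.lt_succ_self)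
    have := hmu i
    rw [transientGain]
    positivity

lemma cascadeInputGain_nonneg (hmu : ∀ j, 0 ≤ mu j) {i : ℕ} (hlam : ∀ j < i, lam j < 1) :
    0 ≤ cascadeInputGain lam mu i := by
  induction i with
  | zero => exact zero_le_one
  | succ i ih =>
    have := ih fun j hj => hlam j (hj.trans i.lt_succ_self)
    have := sub_pos.2 (hlam i i.lt_succ_self)
    have := hmu i
    rw [cascadeInputGain]
    positivity

theorem cascade_le {M : ℕ} {s w : ℝ} {d : ℕ → ℕ → ℝ} (hlam0 : ∀ i, 0 ≤ lam i)
    (hlamρ : ∀ i < M, lam i < ρ) (hρ1 : ρ < 1) (hmu : ∀ i, 0 ≤ mu i) (hs : 0 ≤ s) (hw : 0 ≤ w)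
    (hd0 : ∀ i < M, d i 0 ≤ s) (hfirst : ∀ k, 0 < M → d 0 (k + 1) ≤ lam 0 * d 0 k + mu 0 * w)
    (hnext : ∀ k i, i + 1 < M → d (i + 1) (k + 1) ≤ lam (i + 1) * d (i + 1) k + mu (i + 1) * d i (k + 1))
    {i : ℕ} (hi : i < M) (k : ℕ) :
    d i k ≤ transientGain lam mu ρ (i + 1) * ρ ^ k * s + cascadeInputGain lam mu (i + 1) * w := by
  have hρ0 : 0 ≤ ρ := (hlam0 0).trans (hlamρ 0 (by omega)).le
  have hlam1 : ∀ j < M, lam j < 1 := fun j hj => (hlamρ j hj).trans hρ1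
  induction i generalizing k with
  | zero =>
    exact le_pow_mul_add_of_contraction (hlam0 0) (hlamρ 0 hi) (hlam1 0 hi) (hmu 0) hs hw le_rfl
      zero_le_one (hd0 0 hi) (v := fun _ => w) (fun _ => by simp) (fun k => hfirst k hi) k
  | succ i ih =>
    exact le_pow_mul_add_of_contraction (hlam0 _) (hlamρ _ hi) (hlam1 _ hi) (hmu _) hs hw
      (transientGain_nonneg hρ0 hmu fun j hj => hlamρ j (by omega))
      (cascadeInputGain_nonneg hmu fun j hj => hlam1 j (by omega))
      (hd0 _ hi) (ih (by omega)) (fun k => hnext k i hi) k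

lemma exists_gain_bounds {M : ℕ} (hρ0 : 0 ≤ ρ) (hρ1 : ρ < 1) (hmu : ∀ i, 0 ≤ mu i)
    (hlamρ : ∀ i < M, lam i < ρ) : ∃ C G : ℝ, 0 < C ∧ 0 < G ∧
      ∀ i < M, transientGain lam mu ρ (i + 1) ≤ C ∧ cascadeInputGain lam mu (i + 1) ≤ G := by
  have hT : ∀ i ∈ Finset.range M, 0 ≤ transientGain lam mu ρ (i + 1) := fun i hi =>
    transientGain_nonneg hρ0 hmu fun j hj => hlamρ j (by simp at hi; omega)
  have hG : ∀ i ∈ Finset.range M, 0 ≤ cascadeInputGain lam mu (i + 1) := fun i hi =>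
    cascadeInputGain_nonneg hmu fun j hj => (hlamρ j (by simp at hi; omega)).trans hρ1
  refine ⟨1 + ∑ i ∈ Finset.range M, transientGain lam mu ρ (i + 1),
    1 + ∑ i ∈ Finset.range M, cascadeInputGain lam mu (i + 1),
    by linarith [Finset.sum_nonneg hT], by linarith [Finset.sum_nonneg hG], fun i hi => ⟨?_, ?_⟩⟩
  · linarith [Finset.single_le_sum hT (Finset.mem_range.2 hi)]
  · linarith [Finset.single_le_sum hG (Finset.mem_range.2 hi)]

end Cascade

lemma isKInf_const_mul {c : ℝ} (hc : 0 < c) : IsKInf fun s => c * s := by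
  refine ⟨(continuous_const_mul c).continuousOn, fun a _ b _ hab => mul_lt_mul_of_pos_left hab hc,
    mul_zero c, fun M => ⟨(|M| + 1) / c, by positivity, ?_⟩⟩
  simp only [mul_div_cancel₀ _ hc.ne']
  linarith [le_abs_self M]

lemma isKL_const_mul_pow_mul {C ρ : ℝ} (hC : 0 < C) (hρ0 : 0 < ρ) (hρ1 : ρ < 1) :
    IsKL fun s k => C * ρ ^ k * s := by
  refine ⟨fun k => isKInf_const_mul (by positivity), fun s hs k l hkl => ?_, fun s _ => ?_⟩
  · have := pow_le_pow_of_le_one hρ0.le hρ1.le hkl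
    dsimp only
    gcongr
  · simpa using ((tendsto_pow_atTop_nhds_zero_of_lt_one hρ0.le hρ1).const_mul C).mul_const s

open Topology in
lemma exists_pos_lt_one_forall_lt {M : ℕ} {lam : ℕ → ℝ} (h : ∀ i < M, lam i < 1) :
    ∃ ρ, 0 < ρ ∧ ρ < 1 ∧ ∀ i < M, lam i < ρ := by
  have hev : ∀ᶠ ρ in 𝓝[<] (1 : ℝ), 0 < ρ ∧ ∀ i ∈ Finset.range M, lam i < ρ :=
    ((eventually_gt_nhds one_pos).and ((Finset.eventually_all _).2 fun i hi =>
      eventually_gt_nhds (h i (Finset.mem_range.1 hi)))).filter_mono nhdsWithin_le_nhds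
  obtain ⟨ρ, ⟨hρ0, hlt⟩, hρ1⟩ := (hev.and self_mem_nhdsWithin).exists
  exact ⟨ρ, hρ0, hρ1, fun i hi => hlt i (Finset.mem_range.2 hi)⟩

section DeepGRU

variable {nu M : ℕ} {n : ℕ → ℕ} {layer : ∀ i, GRULayer (inDim nu n i) (n i)}

def IsDeepGRUTrajectory (layer : ∀ i, GRULayer (inDim nu n i) (n i)) (M : ℕ)
    (u : ℕ → Fin nu → ℝ) (x : ℕ → ∀ i, Fin (n i) → ℝ) : Prop :=
  (∀ k, 0 < M → x (k + 1) 0 = (layer 0).step (u k) (x k 0)) ∧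
    ∀ k i, i + 1 < M → x (k + 1) (i + 1) = (layer (i + 1)).step (x (k + 1) i) (x k (i + 1))

namespace IsDeepGRUTrajectory

variable {u : ℕ → Fin nu → ℝ} {x : ℕ → ∀ i, Fin (n i) → ℝ}

lemma norm_le_one (hx : IsDeepGRUTrajectory layer M u x) (h0 : ∀ i < M, ‖x 0 i‖ ≤ 1) (k : ℕ) :
    ∀ i < M, ‖x k i‖ ≤ 1 := by
  induction k with
  | zero => exact h0
  | succ k ih =>
    rintro (_ | i) hi
    · rw [hx.1 k hi]; exact (layer 0).norm_step_le_one _ (ih 0 hi)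
    · rw [hx.2 k i hi]; exact (layer (i + 1)).norm_step_le_one _ (ih (i + 1) hi)

variable {ua ub : ℕ → Fin nu → ℝ} {xa xb : ℕ → ∀ i, Fin (n i) → ℝ}

theorem norm_sub_le (ha : IsDeepGRUTrajectory layer M ua xa)
    (hb : IsDeepGRUTrajectory layer M ub xb) (hA : ∀ i < M, (layer i).candidateStateGain ≤ 1)
    {ρ s w : ℝ} (hρ : ∀ i < M, (layer i).stateGain < ρ) (hρ1 : ρ < 1)
    (hua : ∀ t, ‖ua t‖ ≤ 1) (hub : ∀ t, ‖ub t‖ ≤ 1)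
    (hxa0 : ∀ i < M, ‖xa 0 i‖ ≤ 1) (hxb0 : ∀ i < M, ‖xb 0 i‖ ≤ 1)
    (hs : ∀ i < M, ‖xa 0 i - xb 0 i‖ ≤ s) (hw : ∀ t, ‖ua t - ub t‖ ≤ w)
    {i : ℕ} (hi : i < M) (k : ℕ) :
    ‖xa k i - xb k i‖ ≤
      transientGain (fun i => (layer i).stateGain) (fun i => (layer i).inputGain) ρ (i + 1) *
          ρ ^ k * s +
        cascadeInputGain (fun i => (layer i).stateGain) (fun i => (layer i).inputGain) (i + 1) *
          w := by
  have hxa := ha.norm_le_one hxa0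
  have hxb := hb.norm_le_one hxb0
  refine cascade_le (d := fun i k => ‖xa k i - xb k i‖) (fun i => (layer i).stateGain_nonneg) hρ
    hρ1 (fun i => (layer i).inputGain_nonneg) ((norm_nonneg _).trans (hs 0 (by omega)))
    ((norm_nonneg _).trans (hw 0)) hs (fun k hM => ?_) (fun k i hi => ?_) hi k
  · rw [ha.1 k hM, hb.1 k hM]
    refine ((layer 0).norm_step_sub_le (hua k) (hub k) (hxa k 0 hM) (hxb k 0 hM) (hA 0 hM)).trans ?_
    gcongr
    exacts [(layer 0).inputGain_nonneg, hw k]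
  · rw [ha.2 k i hi, hb.2 k i hi]
    exact (layer (i + 1)).norm_step_sub_le (hxa (k + 1) i (by omega)) (hxb (k + 1) i (by omega))
      (hxa k (i + 1) hi) (hxb k (i + 1) hi) (hA (i + 1) hi)

end IsDeepGRUTrajectory

end DeepGRU

/-- **Corollary 2 (relaxed δISS condition for deep GRUs inside the invariant set).**
With `σ̄_z^i = σ(‖[W_z^i U_z^i b_z^i]‖_∞)`, `σ̄_f^i = σ(‖[W_f^i U_f^i b_f^i]‖_∞)`,
`φ̄_r^i = tanh(‖[W_r^i U_r^i b_r^i]‖_∞)`, if for every layer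
`‖U_r^i‖_∞ ((1/4) ‖U_f^i‖_∞ + σ̄_f^i) < 1 - (1/4) ((1 + φ̄_r^i)/(1 - σ̄_z^i)) ‖U_z^i‖_∞`
then the deep GRU restricted to initial states with `‖x̄^i‖_∞ ≤ 1` for all layers is
Incrementally Input-to-State Stable. -/
theorem deep_gru_deltaISS_relaxed {nu M : ℕ} {n : ℕ → ℕ}
    (Wz Wf Wr : ∀ i : ℕ, Matrix (Fin (n i)) (Fin (inDim nu n i)) ℝ)
    (Uz Uf Ur : ∀ i : ℕ, Matrix (Fin (n i)) (Fin (n i)) ℝ)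
    (bz bf br : ∀ i : ℕ, Fin (n i) → ℝ)
    (hcond : ∀ i < M,
      matNorm (Ur i) * ((1 / 4) * matNorm (Uf i) +
          _root_.sigmoid (catNorm (Wf i) (Uf i) (bf i))) <
        1 - (1 / 4) *
          ((1 + Real.tanh (catNorm (Wr i) (Ur i) (br i))) /
            (1 - _root_.sigmoid (catNorm (Wz i) (Uz i) (bz i)))) *
          matNorm (Uz i)) :
    ∃ β : ℝ → ℕ → ℝ, ∃ γu : ℝ → ℝ, IsKL β ∧ IsKInf γu ∧
      ∀ xbara xbarb : ∀ i : ℕ, Fin (n i) → ℝ,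
        (∀ i < M, ‖xbara i‖ ≤ 1) → (∀ i < M, ‖xbarb i‖ ≤ 1) →
        ∀ ua ub : ℕ → Fin nu → ℝ, (∀ t, ‖ua t‖ ≤ 1) → (∀ t, ‖ub t‖ ≤ 1) →
          ∀ xa xb : ℕ → ∀ i : ℕ, Fin (n i) → ℝ, xa 0 = xbara → xb 0 = xbarb →
            (∀ k, 0 < M → xa (k + 1) 0 =
              gruStep (Wz 0) (Wf 0) (Wr 0) (Uz 0) (Uf 0) (Ur 0) (bz 0) (bf 0) (br 0)
                (ua k) (xa k 0)) →
            (∀ k, ∀ i : ℕ, i + 1 < M → xa (k + 1) (i + 1) =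
              gruStep (Wz (i + 1)) (Wf (i + 1)) (Wr (i + 1)) (Uz (i + 1)) (Uf (i + 1))
                (Ur (i + 1)) (bz (i + 1)) (bf (i + 1)) (br (i + 1))
                (xa (k + 1) i) (xa k (i + 1))) →
            (∀ k, 0 < M → xb (k + 1) 0 =
              gruStep (Wz 0) (Wf 0) (Wr 0) (Uz 0) (Uf 0) (Ur 0) (bz 0) (bf 0) (br 0)
                (ub k) (xb k 0)) →
            (∀ k, ∀ i : ℕ, i + 1 < M → xb (k + 1) (i + 1) =
              gruStep (Wz (i + 1)) (Wf (i + 1)) (Wr (i + 1)) (Uz (i + 1)) (Uf (i + 1))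
                (Ur (i + 1)) (bz (i + 1)) (bf (i + 1)) (br (i + 1))
                (xb (k + 1) i) (xb k (i + 1))) →
              ∀ k : ℕ, (⨆ i : Fin M, ‖xa k (i : ℕ) - xb k (i : ℕ)‖) ≤
                β (⨆ i : Fin M, ‖xbara (i : ℕ) - xbarb (i : ℕ)‖) k +
                  γu (⨆ t, ‖ua t - ub t‖) := by
  let layer : ∀ i, GRULayer (inDim nu n i) (n i) :=
    fun i => ⟨Wz i, Wf i, Wr i, Uz i, Uf i, Ur i, bz i, bf i, br i⟩
  have hrelax : ∀ i < M, (layer i).RelaxedCondition := hcond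
  obtain ⟨ρ, hρ0, hρ1, hρ⟩ :=
    exists_pos_lt_one_forall_lt fun i hi => (layer i).stateGain_lt_one (hrelax i hi)
  obtain ⟨C, G, hC, hG, hgains⟩ :=
    exists_gain_bounds hρ0.le hρ1 (fun i => (layer i).inputGain_nonneg) hρ
  refine ⟨fun s k => C * ρ ^ k * s, fun w => G * w, isKL_const_mul_pow_mul hC hρ0 hρ1,
    isKInf_const_mul hG, ?_⟩
  intro xbara xbarb hxa0 hxb0 ua ub hua hub xa xb rfl rfl hsa0 hsa1 hsb0 hsb1 k
  have hw : BddAbove (Set.range fun t => ‖ua t - ub t‖) := ⟨2, by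
    rintro _ ⟨t, rfl⟩; linarith [norm_sub_le (ua t) (ub t), hua t, hub t]⟩
  have hs0 : 0 ≤ ⨆ i : Fin M, ‖xa 0 i - xb 0 i‖ := Real.iSup_nonneg fun _ => norm_nonneg _
  have hw0 : 0 ≤ ⨆ t, ‖ua t - ub t‖ := Real.iSup_nonneg fun _ => norm_nonneg _
  refine Real.iSup_le (fun i => ?_) (by positivity)
  refine (IsDeepGRUTrajectory.norm_sub_le (layer := layer) ⟨hsa0, hsa1⟩ ⟨hsb0, hsb1⟩
    (fun i hi => ((layer i).candidateStateGain_lt_one (hrelax i hi)).le) hρ hρ1 hua hub hxa0 hxb0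
    (fun i hi => le_ciSup (f := fun i : Fin M => ‖xa 0 i - xb 0 i‖) (Finite.bddAbove_range _)
      ⟨i, hi⟩) (le_ciSup hw) i.isLt k).trans ?_
  obtain ⟨hCi, hGi⟩ := hgains i i.isLt
  dsimp only
  gcongr
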